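/- In the setting of the two-target Fisher analysis, suppose additionally that ⟨g₁, g₂⟩ = 0, ⟨g₁, d₂⟩ = 0, ⟨g₂, d₁⟩ = 0, and ⟨d₁, d₂⟩ = 0. Then the equivalent Fisher information of the fifth parameter equals F = (4 |α₁|² / σ²) ‖d₁‖² (1 − C(g₁, d₁)); that is, there is no information loss about the first target due to the second target. -/

import Mathlib

open Matrix

/-- The coherence of two vectors in ℂ^N. -/
noncomputable def coh {N : ℕ} (g k : EuclideanSpace ℂ (Fin N)) : ℝ :=
  ‖(inner ℂ g k)‖ ^ 2 / (‖g‖ ^ 2 * ‖k‖ ^ 2)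

/-!
The Schur complement of a Gram matrix is the squared distance from the eliminated vector to the
span of the remaining ones: if `r = v₀ - ∑ xⱼ vⱼ` is orthogonal to every `vⱼ`, then `x` solves the
reduced normal equations and the complement equals `‖r‖²`. Under the orthogonality hypotheses the
projection of `α₁ d₁` onto the real span of `g₁, g₂, i g₁, i g₂, α₂ d₂` is its projection onto the
complex line `ℂ g₁`, so `r` is `α₁` times the component of `d₁` orthogonal to `g₁`, of squared norm
`‖d₁‖² (1 - C(g₁, d₁))`.
-/

open RCLike

section ScaledReGram

variable (𝕜 : Type*) {E ι : Type*} [RCLike 𝕜] [NormedAddCommGroup E] [InnerProductSpace 𝕜 E]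
  [Fintype ι]

noncomputable def scaledReGram (s : ℝ) (v : ι → E) : Matrix ι ι ℝ :=
  of fun i j => s * re (inner 𝕜 (v i) (v j))

variable {𝕜}

theorem scaledReGram_schur_eq_norm_sq [DecidableEq ι] (s : ℝ) (v₀ : E) (v : ι → E)
    (x : ι → ℝ) (horth : ∀ i, re (inner 𝕜 (v i) (v₀ - ∑ j, (x j : 𝕜) • v j)) = 0)
    (hG : IsUnit (scaledReGram 𝕜 s v)) :
    s * re (inner 𝕜 v₀ v₀) - (fun i => s * re (inner 𝕜 v₀ (v i))) ⬝ᵥ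
        (scaledReGram 𝕜 s v)⁻¹ *ᵥ (fun i => s * re (inner 𝕜 (v i) v₀))
      = s * ‖v₀ - ∑ j, (x j : 𝕜) • v j‖ ^ 2 := by
  set w := ∑ j, (x j : 𝕜) • v j
  have hre_inner_w (y : E) : re (inner 𝕜 y w) = ∑ j, re (inner 𝕜 y (v j)) * x j := by
    simp only [w, inner_sum, inner_smul_right, map_sum, re_ofReal_mul, mul_comm (x _)]
  have hsolve : scaledReGram 𝕜 s v *ᵥ x = fun i => s * re (inner 𝕜 (v i) v₀) := by
    ext i
    have hi := horth i
    rw [inner_sub_right, map_sub, sub_eq_zero] at hi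
    simp only [mulVec, dotProduct, scaledReGram, of_apply, mul_assoc, ← Finset.mul_sum,
      ← hre_inner_w, hi]
  have : Invertible (scaledReGram 𝕜 s v) := hG.invertible
  rw [inv_mulVec_eq_vec hsolve.symm]
  have hw_orth : re (inner 𝕜 w (v₀ - w)) = 0 := by
    simp only [w, sum_inner, inner_smul_left, map_sum, conj_ofReal, re_ofReal_mul, horth,
      mul_zero, Finset.sum_const_zero]
  calc s * re (inner 𝕜 v₀ v₀) - (fun i => s * re (inner 𝕜 v₀ (v i))) ⬝ᵥ x
      = s * re (inner 𝕜 (v₀ - w) (v₀ - w)) := by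
        simp only [dotProduct, mul_assoc, ← Finset.mul_sum, ← hre_inner_w]
        rw [inner_sub_left, map_sub, hw_orth, sub_zero, inner_sub_right, map_sub, mul_sub]
    _ = s * ‖v₀ - w‖ ^ 2 := by rw [inner_self_eq_norm_sq]

end ScaledReGram

theorem norm_sub_starProjection_singleton_sq {𝕜 E : Type*} [RCLike 𝕜] [NormedAddCommGroup E]
    [InnerProductSpace 𝕜 E] (g d : E) :
    ‖d - (𝕜 ∙ g).starProjection d‖ ^ 2 = ‖d‖ ^ 2 - ‖inner 𝕜 g d‖ ^ 2 / ‖g‖ ^ 2 := by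
  have hpyth := (𝕜 ∙ g).norm_sq_eq_add_norm_sq_starProjection d
  rw [Submodule.starProjection_orthogonal_val] at hpyth
  have hproj : ‖(𝕜 ∙ g).starProjection d‖ ^ 2 = ‖inner 𝕜 g d‖ ^ 2 / ‖g‖ ^ 2 := by
    rcases eq_or_ne g 0 with rfl | hg
    · simp
    rw [Submodule.starProjection_singleton, norm_smul, norm_div, norm_ofReal, abs_sq]
    field_simp
  linarith

theorem sq_norm_mul_one_sub_coh {N : ℕ} (g d : EuclideanSpace ℂ (Fin N)) :
    ‖d‖ ^ 2 * (1 - coh g d) = ‖d‖ ^ 2 - ‖inner ℂ g d‖ ^ 2 / ‖g‖ ^ 2 := by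
  rcases eq_or_ne d 0 with rfl | hd
  · simp
  have : ‖d‖ ≠ 0 := norm_ne_zero_iff.mpr hd
  rw [coh, mul_one_sub, mul_comm (‖g‖ ^ 2), ← div_div, ← mul_div_assoc,
    mul_div_cancel₀ _ (by positivity)]

theorem equivalent_fisher_information_no_loss_general {N : ℕ}
    (g₁ g₂ d₁ d₂ : EuclideanSpace ℂ (Fin N)) (α₁ α₂ : ℂ) (σ : ℝ)
    -- the additional orthogonality assumptions
    (hg₁g₂ : (inner ℂ g₁ g₂) = 0) (hg₁d₂ : (inner ℂ g₁ d₂) = 0)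
    (hg₂d₁ : (inner ℂ g₂ d₁) = 0) (hd₁d₂ : (inner ℂ d₁ d₂) = 0) :
    -- the six columns of the Jacobian of the noiseless signal μ = α₁ g₁ + α₂ g₂
    let u : Fin 6 → EuclideanSpace ℂ (Fin N) :=
      ![g₁, g₂, Complex.I • g₁, Complex.I • g₂, α₁ • d₁, α₂ • d₂]
    -- the 6×6 real Fisher information matrix
    let M : Matrix (Fin 6) (Fin 6) ℝ :=
      Matrix.of fun p q => (4 / σ ^ 2) * (inner ℂ (u p) (u q)).re
    -- the embedding of the index set J = {1,2,3,4,6} (deleting the fifth index)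
    let e : Fin 5 → Fin 6 := (4 : Fin 6).succAbove
    -- the 5×5 principal submatrix M_{J,J}
    let A : Matrix (Fin 5) (Fin 5) ℝ := M.submatrix e e
    IsUnit A →
    -- the equivalent Fisher information (Schur complement) of the fifth parameter
    M 4 4 - (fun i => M 4 (e i)) ⬝ᵥ A⁻¹.mulVec (fun j => M (e j) 4)
      = (4 * ‖α₁‖ ^ 2 / σ ^ 2) * (‖d₁‖ ^ 2 * (1 - coh g₁ d₁)) := by
  intro u M e A hA
  have hue : u ∘ e = ![g₁, g₂, Complex.I • g₁, Complex.I • g₂, α₂ • d₂] := by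
    ext i : 1
    fin_cases i <;> rfl
  set P := (ℂ ∙ g₁).starProjection
  obtain ⟨β, hβ⟩ : ∃ β : ℂ, P (α₁ • d₁) = β • g₁ :=
    ⟨_, Submodule.starProjection_singleton ℂ (α₁ • d₁)⟩
  set x : Fin 5 → ℝ := ![β.re, 0, β.im, 0, 0]
  have hproj : ∑ j, (x j : ℂ) • (u ∘ e) j = P (α₁ • d₁) := by
    rw [hue, hβ]
    simp only [Fin.sum_univ_five, x, cons_val_zero, cons_val_one, cons_val, Complex.ofReal_zero,
      zero_smul, add_zero]
    rw [smul_smul, ← add_smul, Complex.re_add_im]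
  set r := α₁ • d₁ - P (α₁ • d₁)
  have horth_g₁ : inner ℂ g₁ r = 0 :=
    Submodule.mem_orthogonal_singleton_iff_inner_right.mp
      ((ℂ ∙ g₁).sub_starProjection_mem_orthogonal _)
  have horth_g₂ : inner ℂ g₂ r = 0 := by
    simp [r, hβ, hg₂d₁, inner_eq_zero_symm.mp hg₁g₂]
  have horth_d₂ : inner ℂ d₂ r = 0 := by
    simp [r, hβ, inner_eq_zero_symm.mp hd₁d₂, inner_eq_zero_symm.mp hg₁d₂]
  have horth : ∀ i, re (inner ℂ ((u ∘ e) i) (u 4 - ∑ j, (x j : ℂ) • (u ∘ e) j)) = 0 := by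
    intro i
    rw [hproj]
    change re (inner ℂ _ r) = 0
    rw [hue]
    fin_cases i <;> simp [horth_g₁, horth_g₂, horth_d₂]
  refine (scaledReGram_schur_eq_norm_sq (4 / σ ^ 2) (u 4) (u ∘ e) x horth hA).trans ?_
  show 4 / σ ^ 2 * ‖α₁ • d₁ - ∑ j, (x j : ℂ) • (u ∘ e) j‖ ^ 2 = _
  rw [hproj, map_smul, ← smul_sub, norm_smul, mul_pow, norm_sub_starProjection_singleton_sq,
    ← sq_norm_mul_one_sub_coh]
  ring

theorem equivalent_fisher_information_no_loss {N : ℕ}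
    (g₁ g₂ d₁ d₂ : EuclideanSpace ℂ (Fin N)) (α₁ α₂ : ℂ) (σ : ℝ)
    (hα₁ : α₁ ≠ 0) (hα₂ : α₂ ≠ 0) (h₁ : g₁ ≠ 0) (h₂ : g₂ ≠ 0)
    (hli : LinearIndependent ℂ ![g₁, g₂]) (hd₁ : d₁ ≠ 0) (hd₂ : d₂ ≠ 0) (hσ : 0 < σ)
    -- the additional orthogonality assumptions
    (hg₁g₂ : (inner ℂ g₁ g₂) = 0) (hg₁d₂ : (inner ℂ g₁ d₂) = 0)
    (hg₂d₁ : (inner ℂ g₂ d₁) = 0) (hd₁d₂ : (inner ℂ d₁ d₂) = 0) :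
    -- the six columns of the Jacobian of the noiseless signal μ = α₁ g₁ + α₂ g₂
    let u : Fin 6 → EuclideanSpace ℂ (Fin N) :=
      ![g₁, g₂, Complex.I • g₁, Complex.I • g₂, α₁ • d₁, α₂ • d₂]
    -- the 6×6 real Fisher information matrix
    let M : Matrix (Fin 6) (Fin 6) ℝ :=
      Matrix.of fun p q => (4 / σ ^ 2) * (inner ℂ (u p) (u q)).re
    -- the embedding of the index set J = {1,2,3,4,6} (deleting the fifth index)
    let e : Fin 5 → Fin 6 := (4 : Fin 6).succAbove
    -- the 5×5 principal submatrix M_{J,J}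
    let A : Matrix (Fin 5) (Fin 5) ℝ := M.submatrix e e
    IsUnit A →
    -- the equivalent Fisher information (Schur complement) of the fifth parameter
    M 4 4 - (fun i => M 4 (e i)) ⬝ᵥ A⁻¹.mulVec (fun j => M (e j) 4)
      = (4 * ‖α₁‖ ^ 2 / σ ^ 2) * (‖d₁‖ ^ 2 * (1 - coh g₁ d₁)) :=
  equivalent_fisher_information_no_loss_general g₁ g₂ d₁ d₂ α₁ α₂ σ hg₁g₂ hg₁d₂ hg₂d₁ hd₁d₂
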